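/- The QSD μ_{n,1} of the voter model on the star graph K_{n,1} satisfies the nonlocal recurrence (k/n - γ_{n,1}/(n+1))·μ_{n,1}(k,0) = μ_{n,1}(k+1,0)·(k+1)/(n+1) + μ_{n,1}(n-k,0)·(n-k)/(n(n+1)) for 1 ≤ k ≤ n-1, where γ_{n,1} = 2(1 - √(1/2 - 1/(2n))); in particular μ_{n,1}(n-1,0) = γ_{n,1}/(2(n² - n γ_{n,1} - 1)). -/

import Mathlib

/-- `μ` together with eigenvalue `l` is the (unique) quasi-stationary distribution of the
2-opinion voter model on the complete bipartite graph `K_{n,m}`, tracked by the pair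
`(k,h)` of 'yes' counts in the parts of sizes `n` and `m`.  `μ` is extended by `0` outside
the grid `{0,…,n}×{0,…,m}`; the absorbing states `(0,0),(n,m)` and the unreachable states
`(0,m),(n,0)` carry zero mass; `μ` is a probability vector satisfying the left-eigenvector
equation with eigenvalue `l`, and is invariant under relabeling of the two opinions. -/
structure IsBipartiteVoterQSD (n m : ℕ) (μ : ℤ → ℤ → ℝ) (l : ℝ) : Prop where
  nonneg : ∀ k h : ℤ, 0 ≤ μ k h
  zero_outside : ∀ k h : ℤ, (k < 0 ∨ (n : ℤ) < k ∨ h < 0 ∨ (m : ℤ) < h) → μ k h = 0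
  zero_corner₁ : μ 0 0 = 0
  zero_corner₂ : μ n m = 0
  zero_bp₁ : μ 0 m = 0
  zero_bp₂ : μ n 0 = 0
  sum_one : ∑ k ∈ Finset.Icc (0 : ℤ) n, ∑ h ∈ Finset.Icc (0 : ℤ) m, μ k h = 1
  symm : ∀ k h : ℤ, μ k h = μ (n - k) (m - h)
  eigen : ∀ k h : ℤ, 0 ≤ k → k ≤ n → 0 ≤ h → h ≤ m →
    ¬(k = 0 ∧ h = 0) → ¬(k = n ∧ h = m) →
    l * μ k h
      = μ k h * (((k : ℝ) * h + ((n : ℝ) - k) * ((m : ℝ) - h)) / ((n : ℝ) * m))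
        + μ (k - 1) h * ((((n : ℝ) - k + 1) * h) / ((m : ℝ) * ((n : ℝ) + m)))
        + μ (k + 1) h * ((((k : ℝ) + 1) * ((m : ℝ) - h)) / ((m : ℝ) * ((n : ℝ) + m)))
        + μ k (h - 1) * ((((m : ℝ) - h + 1) * k) / ((n : ℝ) * ((n : ℝ) + m)))
        + μ k (h + 1) * ((((h : ℝ) + 1) * ((n : ℝ) - k)) / ((n : ℝ) * ((n : ℝ) + m)))



namespace IsBipartiteVoterQSD

/-- The term `μ (k, 1)` of the eigen-equation at `(k, 0)` becomes `μ (n - k, 0)` by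
opinion-relabeling, which makes the recurrence nonlocal. -/
theorem star_recurrence {n : ℕ} {μ : ℤ → ℤ → ℝ} {l : ℝ}
    (hμ : IsBipartiteVoterQSD n 1 μ l) {k : ℤ} (hk : 1 ≤ k) (hkn : k ≤ n) :
    (l - 1 + k / n) * μ k 0
      = μ (k + 1) 0 * (((k : ℝ) + 1) / ((n : ℝ) + 1))
        + μ ((n : ℤ) - k) 0 * (((n : ℝ) - k) / ((n : ℝ) * ((n : ℝ) + 1))) := by
  have hn : (n : ℝ) ≠ 0 := by
    have : (1 : ℤ) ≤ n := hk.trans hkn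
    exact_mod_cast (by omega : n ≠ 0)
  have heq := hμ.eigen k 0 (by omega) hkn le_rfl zero_le_one
    (by rintro ⟨rfl, -⟩; omega) (by rintro ⟨-, h⟩; exact zero_ne_one h)
  have hflip : μ k 1 = μ (n - k) 0 := by simpa using hμ.symm k 1
  rw [hμ.zero_outside k (0 - 1) (by norm_num), zero_add, hflip] at heq
  push_cast at heq
  field_simp
  field_simp at heq
  linear_combination heq

end IsBipartiteVoterQSD

theorem star_qsd_recurrence (n : ℕ) (hn : 3 ≤ n) (μ : ℤ → ℤ → ℝ)
    (γ : ℝ) (hγ : γ = 2 * (1 - Real.sqrt (1 / 2 - 1 / (2 * (n : ℝ)))))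
    (hμ : IsBipartiteVoterQSD n 1 μ (1 - γ / ((n : ℝ) + 1)))
    (hμ10 : μ 1 0 = γ / 2) :
    (∀ k : ℤ, 1 ≤ k → k ≤ (n : ℤ) - 1 →
      ((k : ℝ) / n - γ / ((n : ℝ) + 1)) * μ k 0
        = μ (k + 1) 0 * (((k : ℝ) + 1) / ((n : ℝ) + 1))
          + μ ((n : ℤ) - k) 0 * (((n : ℝ) - k) / ((n : ℝ) * ((n : ℝ) + 1)))) ∧
    μ ((n : ℤ) - 1) 0 = γ / (2 * ((n : ℝ) ^ 2 - (n : ℝ) * γ - 1)) := by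
  refine ⟨fun k hk hkn => ?_, ?_⟩
  · convert hμ.star_recurrence hk (by omega) using 2
    ring
  · have hn' : (3 : ℝ) ≤ n := by exact_mod_cast hn
    have hγ2 : γ ≤ 2 := by
      rw [hγ]
      linarith [Real.sqrt_nonneg (1 / 2 - 1 / (2 * (n : ℝ)))]
    have hden : 0 < (n : ℝ) ^ 2 - n * γ - 1 := by nlinarith
    have hlast := hμ.star_recurrence (k := n - 1) (by omega) (by omega)
    rw [sub_add_cancel, sub_sub_cancel, hμ.zero_bp₂, hμ10] at hlast
    push_cast at hlast
    rw [eq_div_iff (by positivity)]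
    field_simp at hlast
    linear_combination hlast
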